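/- Let z_1, …, z_n be vectors in ℝ^m with ∑_{i=1}^n z_i = 0, and let I be a uniformly random b-element subset of {1,…,n} (sampling without replacement), with 1 ≤ b ≤ n. Then E[‖(1/b)∑_{i∈I} z_i‖₂²] ≤ (I(b<n)/(bn))∑_{i=1}^n ‖z_i‖₂², where I(b<n) = 1 if b < n and I(b<n) = 0 if b = n. -/

import Mathlib

open Finset

noncomputable section

abbrev Euc (m : ℕ) := EuclideanSpace ℝ (Fin m)

lemma count_supersets {n b : ℕ} (t : Finset (Fin n)) (ht : t.card ≤ b) :
    (univ.filter fun s : Finset (Fin n) => s.card = b ∧ t ⊆ s).card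
      = (n - t.card).choose (b - t.card) := by
  have hc : tᶜ.card = n - t.card := by
    rw [card_compl, Fintype.card_fin]
  rw [← hc, ← Finset.card_powersetCard (b - t.card) tᶜ]
  apply Finset.card_nbij' (fun s => s \ t) (fun u => u ∪ t)
  · intro s hs
    simp only [mem_coe, mem_filter, mem_univ, true_and] at hs
    rw [mem_coe, mem_powersetCard]
    constructor
    · intro x hx
      simp only [mem_sdiff] at hx
      simpa using hx.2
    · rw [card_sdiff_of_subset hs.2, hs.1]
  · intro u hu
    rw [mem_coe, mem_powersetCard] at hu
    have hdisj : Disjoint u t := by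
      intro x hxu hxt y hy
      have := hu.1 (hxu hy)
      simp only [mem_compl] at this
      exact absurd (hxt hy) this
    simp only [mem_coe, mem_filter, mem_univ, true_and]
    refine ⟨?_, subset_union_right⟩
    rw [card_union_of_disjoint hdisj, hu.2]
    omega
  · intro s hs
    simp only [mem_coe, mem_filter, mem_univ, true_and] at hs
    exact sdiff_union_of_subset hs.2
  · intro u hu
    rw [mem_coe, mem_powersetCard] at hu
    apply union_sdiff_cancel_right
    intro x hxu hxt y hy
    have := hu.1 (hxu hy)
    simp only [mem_compl] at this
    exact absurd (hxt hy) this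

/-- if `∑ z_i = 0` and `I` is a uniformly random `b`-element subset of
`{1,…,n}` (without replacement), then
`E[‖(1/b)∑_{i∈I} z_i‖²] ≤ (I(b<n)/(bn)) ∑_i ‖z_i‖²`. The expectation is written as
the average over all `b`-element subsets. -/
theorem mean_sq_norm_batch_without_replacement {n m b : ℕ} (hb : 1 ≤ b) (hbn : b ≤ n)
    (z : Fin n → Euc m) (hz : ∑ i, z i = 0) :
    (((Finset.univ.filter fun s : Finset (Fin n) => s.card = b).card : ℝ))⁻¹ *
        ∑ s ∈ Finset.univ.filter (fun s : Finset (Fin n) => s.card = b),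
          ‖(b : ℝ)⁻¹ • ∑ i ∈ s, z i‖ ^ 2
      ≤ ((if b < n then (1 : ℝ) else 0) / ((b : ℝ) * n)) * ∑ i, ‖z i‖ ^ 2 := by
  classical
  by_cases hlt : b < n
  swap
  · -- b = n case
    have hbe : b = n := le_antisymm hbn (not_lt.mp hlt)
    subst hbe
    have hA : univ.filter (fun s : Finset (Fin b) => s.card = b) = {univ} := by
      ext s
      simp only [mem_filter, mem_univ, true_and, mem_singleton]
      constructor
      · intro h; apply Finset.eq_univ_of_card; rw [h, Fintype.card_fin]
      · rintro rfl; simp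
    rw [hA]
    simp [hz, hlt]
  -- main case b < n
  set A := univ.filter (fun s : Finset (Fin n) => s.card = b) with hA
  set S := ∑ i, ‖z i‖ ^ 2 with hSdef
  have hS0 : (0:ℝ) ≤ S := Finset.sum_nonneg fun i _ => by positivity
  have hNA : A.card = n.choose b := by
    have : A = univ.powersetCard b := by
      ext s; simp [hA, mem_powersetCard]
    rw [this, Finset.card_powersetCard, card_univ, Fintype.card_fin]
  have hNpos : 0 < n.choose b := Nat.choose_pos hbn
  set c : ℕ := if 2 ≤ b then (n-2).choose (b-2) else 0 with hcdef
  -- counting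
  have count1 : ∀ i : Fin n, (A.filter fun s => i ∈ s).card = (n-1).choose (b-1) := by
    intro i
    have := count_supersets (n := n) (b := b) {i} (by simpa using hb)
    simp only [card_singleton] at this
    rw [← this, hA, filter_filter]
    congr 1
    ext s
    simp
  have count2 : ∀ i j : Fin n, i ≠ j →
      (A.filter fun s => i ∈ s ∧ j ∈ s).card = c := by
    intro i j hij
    by_cases h2 : 2 ≤ b
    · have hcard : ({i, j} : Finset (Fin n)).card = 2 := by
        rw [card_insert_of_notMem (by simpa using hij), card_singleton]
      have := count_supersets (n := n) (b := b) {i, j} (by rw [hcard]; exact h2)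
      rw [hcard] at this
      rw [hcdef, if_pos h2, ← this, hA, filter_filter]
      congr 1
      ext s
      simp [insert_subset_iff]
    · rw [hcdef, if_neg h2]
      rw [Finset.card_eq_zero]
      rw [Finset.filter_eq_empty_iff]
      rintro s hs ⟨his, hjs⟩
      simp only [hA, mem_filter, mem_univ, true_and] at hs
      have : 1 < s.card := Finset.one_lt_card.mpr ⟨i, his, j, hjs, hij⟩
      omega
  -- expand squared norm into double sum of inner products
  have expand : ∀ s : Finset (Fin n), ‖∑ i ∈ s, z i‖ ^ 2
      = ∑ i, ∑ j, if i ∈ s ∧ j ∈ s then (inner ℝ (z i) (z j) : ℝ) else 0 := by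
    intro s
    rw [← real_inner_self_eq_norm_sq, sum_inner]
    simp_rw [inner_sum]
    calc ∑ i ∈ s, ∑ j ∈ s, (inner ℝ (z i) (z j) : ℝ)
        = ∑ i ∈ s, ∑ j, if j ∈ s then (inner ℝ (z i) (z j) : ℝ) else 0 := by
          apply Finset.sum_congr rfl; intro i _
          rw [Finset.sum_ite_mem, univ_inter]
      _ = ∑ i, if i ∈ s then ∑ j, if j ∈ s then (inner ℝ (z i) (z j) : ℝ) else 0 else 0 := by
          rw [Finset.sum_ite_mem, univ_inter]
      _ = ∑ i, ∑ j, if i ∈ s ∧ j ∈ s then (inner ℝ (z i) (z j) : ℝ) else 0 := by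
          apply Finset.sum_congr rfl; intro i _
          by_cases hi : i ∈ s <;> simp [hi]
  -- the key identity for T
  set T := ∑ s ∈ A, ‖∑ i ∈ s, z i‖ ^ 2 with hTdef
  have hT : T = ∑ i, ∑ j, (inner ℝ (z i) (z j) : ℝ) *
      (if j = i then (((n-1).choose (b-1) : ℕ) : ℝ) else (c : ℝ)) := by
    rw [hTdef]
    simp_rw [expand]
    rw [Finset.sum_comm]
    apply Finset.sum_congr rfl; intro i _
    rw [Finset.sum_comm]
    apply Finset.sum_congr rfl; intro j _
    rw [← Finset.sum_filter, Finset.sum_const, nsmul_eq_mul]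
    by_cases hij : j = i
    · subst hij
      have : (A.filter fun s => j ∈ s ∧ j ∈ s) = A.filter fun s => j ∈ s := by
        congr 1; ext s; simp
      rw [this, count1 j, if_pos rfl, mul_comm]
    · rw [count2 i j (Ne.symm hij), if_neg hij, mul_comm]
  -- double sum of inners is zero
  have hdouble : ∑ i, ∑ j, (inner ℝ (z i) (z j) : ℝ) = 0 := by
    have : ∑ i, ∑ j, (inner ℝ (z i) (z j) : ℝ) = (inner ℝ (∑ i, z i) (∑ j, z j) : ℝ) := by
      rw [sum_inner]
      simp_rw [inner_sum]
    rw [this, hz, inner_zero_left]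
  -- diagonal sum is S
  have hdiag : ∑ i, (inner ℝ (z i) (z i) : ℝ) = S := by
    apply Finset.sum_congr rfl; intro i _
    exact real_inner_self_eq_norm_sq (z i)
  -- T = (C1 - c) * S
  have hTval : T = (((n-1).choose (b-1) : ℝ) - (c : ℝ)) * S := by
    rw [hT]
    have hrow : ∀ i : Fin n, (∑ j, (inner ℝ (z i) (z j) : ℝ) *
        if j = i then (((n-1).choose (b-1) : ℕ) : ℝ) else (c : ℝ))
        = (c : ℝ) * ∑ j, (inner ℝ (z i) (z j) : ℝ)
          + ((((n-1).choose (b-1) : ℕ) : ℝ) - (c : ℝ)) * (inner ℝ (z i) (z i) : ℝ) := by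
      intro i
      have h1 : ∀ j : Fin n, (inner ℝ (z i) (z j) : ℝ) *
          (if j = i then (((n-1).choose (b-1) : ℕ) : ℝ) else (c : ℝ))
          = (c : ℝ) * (inner ℝ (z i) (z j) : ℝ)
            + (if j = i then ((((n-1).choose (b-1) : ℕ) : ℝ) - (c : ℝ)) * (inner ℝ (z i) (z j) : ℝ)
              else 0) := by
        intro j; by_cases h : j = i <;> simp [h] <;> ring
      simp_rw [h1]
      rw [Finset.sum_add_distrib, ← Finset.mul_sum,
        Finset.sum_ite_eq' univ i, if_pos (mem_univ i)]
    simp_rw [hrow]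
    rw [Finset.sum_add_distrib, ← Finset.mul_sum, hdouble, mul_zero, zero_add,
      ← Finset.mul_sum, hdiag]
  -- combinatorial identity n * C(n-1,b-1) = C(n,b) * b
  have hid : n * (n-1).choose (b-1) = n.choose b * b := by
    have h := Nat.add_one_mul_choose_eq (n-1) (b-1)
    have hn1 : n - 1 + 1 = n := by omega
    have hb1 : b - 1 + 1 = b := by omega
    rw [hn1, hb1] at h
    exact h
  have hb0 : (b : ℝ) ≠ 0 := by positivity
  have hn0 : (n : ℝ) ≠ 0 := by
    have : 0 < n := lt_of_le_of_lt (Nat.zero_le b) hlt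
    positivity
  have hN0 : ((n.choose b : ℕ) : ℝ) ≠ 0 := by
    exact_mod_cast hNpos.ne'
  have hidR : (n : ℝ) * (((n-1).choose (b-1) : ℕ) : ℝ) = ((n.choose b : ℕ) : ℝ) * b := by
    exact_mod_cast hid
  -- rewrite the sum in the goal
  have hsum : ∑ s ∈ A, ‖(b : ℝ)⁻¹ • ∑ i ∈ s, z i‖ ^ 2 = ((b : ℝ)⁻¹) ^ 2 * T := by
    rw [hTdef, Finset.mul_sum]
    apply Finset.sum_congr rfl; intro s _
    rw [norm_smul, mul_pow]
    congr 1
    rw [norm_inv, Real.norm_natCast]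
  rw [hsum, hNA, if_pos hlt]
  have hTle : T ≤ (((n-1).choose (b-1) : ℕ) : ℝ) * S := by
    rw [hTval]
    apply mul_le_mul_of_nonneg_right _ hS0
    simp only [sub_le_self_iff]
    positivity
  have key : ((n.choose b : ℕ) : ℝ)⁻¹ * (((b : ℝ)⁻¹) ^ 2 * ((((n-1).choose (b-1) : ℕ) : ℝ) * S))
      = 1 / ((b : ℝ) * n) * S := by
    field_simp
    linear_combination S * hidR
  calc ((n.choose b : ℕ) : ℝ)⁻¹ * (((b : ℝ)⁻¹) ^ 2 * T)
      ≤ ((n.choose b : ℕ) : ℝ)⁻¹ * (((b : ℝ)⁻¹) ^ 2 * ((((n-1).choose (b-1) : ℕ) : ℝ) * S)) := by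
        apply mul_le_mul_of_nonneg_left _ (by positivity)
        exact mul_le_mul_of_nonneg_left hTle (by positivity)
    _ = 1 / ((b : ℝ) * n) * S := key
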